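/- Let 𝓗 = ([r], ℰ) be a simple hypergraph with no isolated vertices, each edge of cardinality at least 2, and no edge contained in another. Let K be a field, R = K[X_1,…,X_r], and J(𝓗) ⊆ R the cover ideal of 𝓗. Then astab(J(𝓗)) ≥ χ(𝓗) − 1, where χ(𝓗) is the chromatic number of 𝓗. -/

import Mathlib

/-- The graded maximal ideal `𝔪 = (X₁,…,X_r)` of `K[X₁,…,X_r]`. -/
noncomputable def mxIdeal (K : Type) [Field K] (r : ℕ) : Ideal (MvPolynomial (Fin r) K) :=
  Ideal.span (Set.range (MvPolynomial.X : Fin r → MvPolynomial (Fin r) K))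

/-- A monomial ideal: an ideal generated by monomials `X^α`. -/
def IsMonomialIdeal {K : Type} [Field K] {r : ℕ} (I : Ideal (MvPolynomial (Fin r) K)) : Prop :=
  ∃ S : Set (Fin r →₀ ℕ),
    I = Ideal.span ((fun α : Fin r →₀ ℕ => MvPolynomial.monomial α (1 : K)) '' S)

/-- `astab I` is the least `s ≥ 1` such that `Ass(R/Iⁿ) = Ass(R/Iˢ)` for all `n ≥ s`. -/
noncomputable def astab {R : Type} [CommRing R] (I : Ideal R) : ℕ :=
  sInf {s : ℕ | 1 ≤ s ∧ ∀ n : ℕ, s ≤ n →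
    associatedPrimes R (R ⧸ I ^ n) = associatedPrimes R (R ⧸ I ^ s)}

/-- `W` is a vertex cover of the hypergraph with edge set `E`: it meets every edge. -/
def IsVertexCover {r : ℕ} (E : Set (Finset (Fin r))) (W : Finset (Fin r)) : Prop :=
  ∀ e ∈ E, ∃ v ∈ e, v ∈ W

/-- The cover ideal `J(𝓗)` of a hypergraph: generated by the squarefree monomials
`∏_{i ∈ W} Xᵢ` over the minimal vertex covers `W`. -/
noncomputable def coverIdeal (K : Type) [Field K] {r : ℕ} (E : Set (Finset (Fin r))) :
    Ideal (MvPolynomial (Fin r) K) :=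
  Ideal.span {p | ∃ W : Finset (Fin r), IsVertexCover E W ∧
    (∀ W' ⊆ W, IsVertexCover E W' → W' = W) ∧ p = ∏ i ∈ W, MvPolynomial.X i}

/-- The chromatic number of a hypergraph: the least `t` admitting a `t`-coloring,
i.e. a partition of the vertices into `t` classes with no edge contained in a class. -/
noncomputable def hChromaticNumber {r : ℕ} (E : Set (Finset (Fin r))) : ℕ :=
  sInf {t : ℕ | ∃ c : Fin r → Fin t, ∀ e ∈ E, ∀ i : Fin t, ¬ (∀ v ∈ e, c v = i)}

/-!
Let `d = χ(𝓗) - 1` and let `S` be a minimal vertex set whose induced subhypergraph `𝓗_S` is not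
`d`-colorable. A `t`-coloring of `𝓗_S` amounts to `t` vertex covers such that every vertex of `S`
avoids one of them, and a monomial lies in `Jᵗ` exactly when it is divisible by a product of `t`
cover monomials. Hence `P_S = (X_v : v ∈ S)` is the annihilator of `x^β` modulo `J^d`, where
`β = d - 𝟙_S`, while `P_S ∈ Ass(R/Jˢ)` yields an `(s + 1)`-coloring of `𝓗_S`; so `P_S` is
associated to `J^d` but to no `Jˢ` with `s < d`. As `J` is a monomial ideal, all associated primes
of its powers are among the finitely many `P_T`, and a Rees-algebra argument then shows that
`Ass(R/Jⁿ)` stabilises. So `astab J` is attained, and `astab J < d` would put `P_S` into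
`Ass(R/J^{astab J})`.
-/

theorem MonotoneOn.exists_forall_ge_eq {β : Type*} [PartialOrder β] {f : ℕ → β} {N : ℕ}
    (hf : MonotoneOn f (Set.Ici N)) (hfin : (f '' Set.Ici N).Finite) :
    ∃ M ≥ N, ∀ n ≥ M, f n = f M := by
  obtain ⟨M, hM, hmax⟩ := hfin.exists_maximalFor' f _ ⟨N, Set.mem_Ici.mpr le_rfl⟩
  refine ⟨M, hM, fun n hn => ?_⟩
  have hn' : n ∈ Set.Ici N := le_trans hM hn
  exact le_antisymm (hmax hn' (hf hM hn' hn)) (hf hM hn' hn)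

theorem AntitoneOn.exists_forall_ge_eq {β : Type*} [PartialOrder β] {f : ℕ → β} {N : ℕ}
    (hf : AntitoneOn f (Set.Ici N)) (hfin : (f '' Set.Ici N).Finite) :
    ∃ M ≥ N, ∀ n ≥ M, f n = f M :=
  MonotoneOn.exists_forall_ge_eq (f := OrderDual.toDual ∘ f) hf.dual_right
    (by rw [Set.image_comp]; exact hfin.image _)

namespace Ideal

variable {R : Type*} [CommRing R]

theorem mem_associatedPrimes_quotient_iff [IsNoetherianRing R] {I P : Ideal R} :
    P ∈ associatedPrimes R (R ⧸ I) ↔ P.IsPrime ∧ ∃ f, P = I.colon {f} := by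
  rw [AssociatedPrimes.mem_iff, isAssociatedPrime_iff, Quotient.mk_surjective.exists]
  have (f : R) : (⊥ : Submodule R (R ⧸ I)).colon {Quotient.mk I f} = I.colon {f} := by
    ext q
    rw [Submodule.mem_colon_singleton, Submodule.mem_colon_singleton, Submodule.mem_bot,
      Algebra.smul_def, Quotient.algebraMap_eq, ← map_mul, Quotient.eq_zero_iff_mem, smul_eq_mul]
  simp only [this]

theorem mem_colon_singleton_mul {I : Ideal R} {a b q : R} :
    q ∈ I.colon {a * b} ↔ q * a ∈ I.colon {b} := by
  simp only [Submodule.mem_colon_singleton, smul_eq_mul, mul_assoc]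

/-- For `I' ≤ I`, these are the associated primes of the module `I / I'`. -/
def colonPrimes (I I' : Ideal R) : Set (Ideal R) :=
  {P | P.IsPrime ∧ ∃ m ∈ I, P = I'.colon {m}}

theorem associatedPrimes_quotient_subset [IsNoetherianRing R] {I I' : Ideal R} (h : I' ≤ I) :
    associatedPrimes R (R ⧸ I') ⊆ colonPrimes I I' ∪ associatedPrimes R (R ⧸ I) := by
  intro P hP
  obtain ⟨hPp, f, rfl⟩ := mem_associatedPrimes_quotient_iff.mp hP
  by_cases! hf : ∀ a, a * f ∈ I → a ∈ I'.colon {f}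
  · refine Or.inr (mem_associatedPrimes_quotient_iff.mpr ⟨hPp, f, le_antisymm ?_ ?_⟩)
    · exact Submodule.colon_mono h le_rfl
    · exact fun q hq => hf q (Submodule.mem_colon_singleton.mp hq)
  · obtain ⟨a, haf, ha⟩ := hf
    refine Or.inl ⟨hPp, a * f, haf, ?_⟩
    ext q
    rw [mem_colon_singleton_mul]
    exact ⟨fun hq => mul_mem_right a _ hq, fun hq => (hPp.mem_or_mem hq).resolve_right ha⟩

open Polynomial in
/-- The ideal of the (noetherian) Rees algebra generated by the `m tⁿ` with `m ∈ Jⁿ`,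
`mJ ⊆ Jⁿ⁺²` is generated in degrees `≤ N`; such a generator `w tᵈ` reaches degree `n > N` only
through a factor from `Jⁿ⁻ᵈ ⊆ J · Jⁿ⁻ᵈ⁻¹`, which puts the coefficient into `Jⁿ⁺¹`. -/
theorem exists_pow_inf_colon_le [IsNoetherianRing R] (J : Ideal R) :
    ∃ N, ∀ n, N < n → J ^ n ⊓ (J ^ (n + 2)).colon (J : Set R) ≤ J ^ (n + 1) := by
  let G : ℕ → Set (reesAlgebra J) := fun N =>
    {x | ∃ d ≤ N, ∃ w ∈ J ^ d ⊓ (J ^ (d + 2)).colon (J : Set R), (x : R[X]) = monomial d w}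
  let chain : ℕ →o Ideal (reesAlgebra J) := ⟨fun N => Ideal.span (G N), fun a b hab =>
    Ideal.span_mono fun x ⟨d, hd, hx⟩ => ⟨d, hd.trans hab, hx⟩⟩
  obtain ⟨N, hN⟩ := monotone_stabilizes_iff_noetherian.mpr inferInstance chain
  refine ⟨N, fun n hn m hm => ?_⟩
  have hmem : (⟨monomial n m, reesAlgebra.monomial_mem.mpr hm.1⟩ : reesAlgebra J) ∈ chain N := by
    rw [hN n hn.le]
    exact Ideal.subset_span ⟨n, le_rfl, m, hm, rfl⟩
  obtain ⟨T, hTG, hT⟩ := Submodule.mem_span_finite_of_mem_span hmem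
  obtain ⟨c, -, hc⟩ := Submodule.mem_span_finset.mp hT
  have hcoeff := congrArg (fun x : reesAlgebra J => (x : R[X]).coeff n) hc
  simp only [coeff_monomial_same, AddSubmonoidClass.coe_finsetSum, finsetSum_coeff] at hcoeff
  rw [← hcoeff]
  refine Ideal.sum_mem _ fun x hx => ?_
  obtain ⟨d, hd, w, ⟨-, hw⟩, hxw⟩ := hTG hx
  obtain ⟨k, hdn⟩ : ∃ k, n = k + 1 + d := ⟨n - d - 1, by omega⟩
  have hJw : J * Ideal.span {w} ≤ J ^ (d + 2) := by
    rw [Ideal.mul_le]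
    intro u hu v hv
    obtain ⟨t, rfl⟩ := Ideal.mem_span_singleton'.mp hv
    simpa [mul_left_comm, mul_comm] using Ideal.mul_mem_left _ t (Submodule.mem_colon.mp hw u hu)
  have hle : J ^ (k + 1) * Ideal.span {w} ≤ J ^ (n + 1) :=
    calc J ^ (k + 1) * Ideal.span {w} = J ^ k * (J * Ideal.span {w}) := by rw [pow_succ, mul_assoc]
      _ ≤ J ^ k * J ^ (d + 2) := Ideal.mul_mono_right hJw
      _ = J ^ (n + 1) := by rw [← pow_add]; congr 1; omega
  rw [smul_eq_mul, Subalgebra.coe_mul, hxw, hdn, coeff_mul_monomial, ← hdn]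
  exact hle (Ideal.mul_mem_mul ((c x).2 _) (Ideal.mem_span_singleton_self w))

/-- If `P = Jⁿ⁺¹ : m` is prime, then `P ⊇ ⋂ᵤ (Jⁿ⁺² : u m)` over generators `u` of `J`, by
`exists_pow_inf_colon_le`; a prime containing a finite intersection contains a member. -/
theorem exists_colonPrimes_pow_subset_succ [IsNoetherianRing R] (J : Ideal R) :
    ∃ N, ∀ n, N < n →
      colonPrimes (J ^ n) (J ^ (n + 1)) ⊆ colonPrimes (J ^ (n + 1)) (J ^ (n + 2)) := by
  obtain ⟨N, hN⟩ := exists_pow_inf_colon_le J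
  obtain ⟨s, hs⟩ := IsNoetherian.noetherian J
  refine ⟨N, fun n hn P ⟨hP, m, hm, hPm⟩ => ?_⟩
  have hJs : (J ^ (n + 2)).colon (J : Set R) = (J ^ (n + 2)).colon (s : Set R) := by
    simpa only [Ideal.span, hs] using colon_span (I := J ^ (n + 2)) (S := (s : Set R))
  have hinf : s.inf (fun u => (J ^ (n + 2)).colon {u * m}) ≤ P := by
    intro q hq
    rw [hPm, Submodule.mem_colon_singleton, smul_eq_mul]
    refine hN n hn ⟨mul_mem_left _ q hm, ?_⟩
    change q * m ∈ (J ^ (n + 2)).colon (J : Set R)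
    rw [hJs, Submodule.mem_colon]
    intro u hu
    have := (Submodule.mem_finsetInf.mp hq) u hu
    rwa [Submodule.mem_colon_singleton, smul_eq_mul, ← mul_assoc, mul_right_comm] at this
  obtain ⟨u, hu, hle⟩ := hP.inf_le'.mp hinf
  have huJ : u ∈ J := hs ▸ subset_span hu
  refine ⟨hP, u * m, by rw [pow_succ']; exact mul_mem_mul huJ hm, le_antisymm ?_ hle⟩
  intro q hq
  rw [hPm, Submodule.mem_colon_singleton, smul_eq_mul] at hq
  rw [Submodule.mem_colon_singleton, smul_eq_mul, mul_left_comm, pow_succ' J (n + 1)]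
  exact mul_mem_mul huJ hq

/-- With `Bₙ = colonPrimes (Jⁿ) (Jⁿ⁺¹)` we have `Bₙ ⊆ Ass(R/Jⁿ⁺¹) ⊆ Bₙ ∪ Ass(R/Jⁿ)` and `Bₙ`
eventually increasing; inside a finite set first `Bₙ` and then `Ass(R/Jⁿ) \ B_∞` stabilise. -/
theorem exists_associatedPrimes_pow_eq [IsNoetherianRing R] (J : Ideal R)
    (hfin : (⋃ n, associatedPrimes R (R ⧸ J ^ n)).Finite) :
    ∃ s, ∀ n ≥ s, associatedPrimes R (R ⧸ J ^ n) = associatedPrimes R (R ⧸ J ^ s) := by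
  set A : ℕ → Set (Ideal R) := fun n => associatedPrimes R (R ⧸ J ^ n)
  set B : ℕ → Set (Ideal R) := fun n => colonPrimes (J ^ n) (J ^ (n + 1))
  have hBA (n : ℕ) : B n ⊆ A (n + 1) := fun P ⟨hP, m, _, hPm⟩ =>
    mem_associatedPrimes_quotient_iff.mpr ⟨hP, m, hPm⟩
  have hAB (n : ℕ) : A (n + 1) ⊆ B n ∪ A n :=
    associatedPrimes_quotient_subset (pow_le_pow_right (Nat.le_succ n))
  have hAU (n : ℕ) : A n ⊆ ⋃ k, A k := Set.subset_iUnion A n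
  obtain ⟨N, hN⟩ := exists_colonPrimes_pow_subset_succ J
  obtain ⟨M₁, -, hB⟩ := MonotoneOn.exists_forall_ge_eq (f := B) (N := N + 1)
    (monotoneOn_nat_Ici_of_le_succ fun n hn => hN n hn)
    (hfin.finite_subsets.subset (Set.image_subset_iff.mpr fun n _ => (hBA n).trans (hAU _)))
  obtain ⟨M₂, hM₂, hD⟩ := AntitoneOn.exists_forall_ge_eq (f := fun n => A n \ B M₁) (N := M₁)
    (antitoneOn_nat_Ici_of_succ_le fun n hn P ⟨hPA, hPB⟩ =>
      ⟨((hAB n hPA).resolve_left (hB n hn ▸ hPB)), hPB⟩)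
    (hfin.finite_subsets.subset
      (Set.image_subset_iff.mpr fun n _ => Set.sdiff_subset.trans (hAU n)))
  have hAeq : ∀ n > M₂, A n = B M₁ ∪ (A M₂ \ B M₁) := by
    intro n hn
    obtain ⟨k, rfl⟩ : ∃ k, n = k + 1 := ⟨n - 1, by omega⟩
    rw [← hD (k + 1) (by omega), Set.union_sdiff_cancel (hB k (by omega) ▸ hBA k)]
  exact ⟨M₂ + 1, fun n hn => (hAeq n (by omega)).trans (hAeq (M₂ + 1) (by omega)).symm⟩

end Ideal

open MvPolynomial
open scoped Pointwise

theorem MonomialOrder.card_support_subLTerm_lt {σ R : Type*} [CommRing R] (m : MonomialOrder σ)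
    {f : MvPolynomial σ R} (hf : f ≠ 0) :
    (m.subLTerm f).support.card < f.support.card := by
  classical
  have : (m.subLTerm f).support = f.support.erase (m.degree f) := by
    ext α
    by_cases h : α = m.degree f <;> simp [subLTerm, coeff_monomial, leadingCoeff, h, eq_comm]
  rw [this]
  exact Finset.card_erase_lt_of_mem (m.degree_mem_support hf)

theorem MvPolynomial.card_support_monomial_mul_le {σ R : Type*} [CommSemiring R]
    (a : σ →₀ ℕ) (c : R) (f : MvPolynomial σ R) :
    (monomial a c * f).support.card ≤ f.support.card := by
  classical
  calc (monomial a c * f).support.card ≤ ({a} + f.support : Finset (σ →₀ ℕ)).card :=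
        Finset.card_le_card ((support_mul _ _).trans
          (Finset.add_subset_add_right support_monomial_subset))
    _ ≤ f.support.card := by rw [Finset.singleton_add]; exact Finset.card_image_le

theorem MvPolynomial.isPrime_span_X_image {σ R : Type*} [CommRing R] [IsDomain R] (T : Set σ) :
    (Ideal.span (X '' T : Set (MvPolynomial σ R))).IsPrime := by
  classical
  let φ : MvPolynomial σ R →ₐ[R] MvPolynomial σ R := aeval fun i => if i ∈ T then 0 else X i
  have hsub (f : MvPolynomial σ R) : f - φ f ∈ Ideal.span (X '' T) := by
    induction f using MvPolynomial.induction_on with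
    | C a => simp
    | add p q hp hq => simpa [add_sub_add_comm] using Ideal.add_mem _ hp hq
    | mul_X p i hp =>
      by_cases hi : i ∈ T
      · simpa [φ, hi] using Ideal.mul_mem_left _ p (Ideal.subset_span (Set.mem_image_of_mem X hi))
      · simpa [φ, hi, sub_mul] using Ideal.mul_mem_right (X i) _ hp
  have hker : Ideal.span (X '' T) = RingHom.ker φ := by
    refine le_antisymm (Ideal.span_le.mpr ?_) fun f hf => by
      simpa [RingHom.mem_ker.mp hf] using hsub f
    rintro _ ⟨i, hi, rfl⟩
    simp [φ, hi]
  rw [hker]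
  exact RingHom.ker_isPrime _

namespace IsMonomialIdeal

variable {K : Type} [Field K] {r : ℕ} {I : Ideal (MvPolynomial (Fin r) K)}

theorem monomial_mem_of_mem_support (hI : IsMonomialIdeal I) {f : MvPolynomial (Fin r) K}
    (hf : f ∈ I) {α : Fin r →₀ ℕ} (hα : α ∈ f.support) : monomial α 1 ∈ I := by
  classical
  obtain ⟨S, rfl⟩ := hI
  rw [mem_ideal_span_monomial_image] at hf ⊢
  intro β hβ
  rw [support_monomial, if_neg one_ne_zero, Finset.mem_singleton] at hβ
  exact hβ ▸ hf α hα

theorem mem_iff (hI : IsMonomialIdeal I) {f : MvPolynomial (Fin r) K} :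
    f ∈ I ↔ ∀ α ∈ f.support, monomial α 1 ∈ I := by
  refine ⟨fun hf α hα => hI.monomial_mem_of_mem_support hf hα, fun h => ?_⟩
  rw [f.as_sum]
  refine Ideal.sum_mem _ fun α hα => ?_
  rw [← mul_one (coeff α f), ← C_mul_monomial]
  exact Ideal.mul_mem_left _ _ (h α hα)

theorem monomial_degree_mem_of_eq_colon (hI : IsMonomialIdeal I)
    {P : Ideal (MvPolynomial (Fin r) K)} (hP : P.IsPrime) (m : MonomialOrder (Fin r))
    {p : MvPolynomial (Fin r) K} (hp : p ∈ P) (hp0 : p ≠ 0) {g : MvPolynomial (Fin r) K}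
    (hg : P = I.colon {g}) :
    monomial (m.degree p) 1 ∈ P := by
  induction h : g.support.card using Nat.strong_induction_on generalizing g with
  | _ n ih =>
  by_contra hκ
  have hg0 : g ≠ 0 := by
    rintro rfl
    exact hP.ne_top (by rw [hg, Submodule.colon_singleton_zero])
  have hpg : p * g ∈ I := by
    rw [hg, Submodule.mem_colon_singleton, smul_eq_mul] at hp
    exact hp
  have hlead : monomial (m.degree p + m.degree g) 1 ∈ I := by
    refine hI.monomial_mem_of_mem_support hpg ?_
    rw [mem_support_iff, m.coeff_mul_of_degree_add]
    exact mul_ne_zero (m.leadingCoeff_ne_zero_iff.mpr hp0) (m.leadingCoeff_ne_zero_iff.mpr hg0)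
  -- as `x^{deg p} ∉ P`, replacing `g` by `x^{deg p} g` keeps the colon ideal, and modulo `I` the
  -- leading term of `g` can then be dropped; this lowers the number of terms
  have hg' : P = I.colon {monomial (m.degree p) 1 * m.subLTerm g} := by
    ext q
    have hsplit : q * monomial (m.degree p) 1 * g = q * (monomial (m.degree p) 1 * m.subLTerm g)
        + q * C (m.leadingCoeff g) * monomial (m.degree p + m.degree g) 1 := by
      rw [MonomialOrder.subLTerm, mul_sub, mul_sub, monomial_mul, one_mul, mul_assoc q (C _),
        C_mul_monomial, mul_one]
      ring
    rw [Submodule.mem_colon_singleton, smul_eq_mul, ← Ideal.add_mem_iff_left I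
      (Ideal.mul_mem_left _ _ hlead), ← hsplit, ← smul_eq_mul, ← Submodule.mem_colon_singleton,
      ← hg]
    exact ⟨fun hq => Ideal.mul_mem_right _ _ hq, fun hq => (hP.mem_or_mem hq).resolve_right hκ⟩
  refine hκ (ih _ ?_ hg' rfl)
  exact h ▸ (card_support_monomial_mul_le _ _ _).trans_lt (m.card_support_subLTerm_lt hg0)

theorem monomial_mem_of_eq_colon (hI : IsMonomialIdeal I) {P : Ideal (MvPolynomial (Fin r) K)}
    (hP : P.IsPrime) {g : MvPolynomial (Fin r) K} (hg : P = I.colon {g})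
    {p : MvPolynomial (Fin r) K} (hp : p ∈ P) {α : Fin r →₀ ℕ} (hα : α ∈ p.support) :
    monomial α 1 ∈ P := by
  induction h : p.support.card using Nat.strong_induction_on generalizing p with
  | _ n ih =>
  have hp0 : p ≠ 0 := by rintro rfl; simp at hα
  have hlead := hI.monomial_degree_mem_of_eq_colon hP MonomialOrder.lex hp hp0 hg
  by_cases hαd : α = MonomialOrder.lex.degree p
  · exact hαd ▸ hlead
  · refine ih _ (h ▸ MonomialOrder.lex.card_support_subLTerm_lt hp0) ?_ ?_ rfl
    · refine Ideal.sub_mem _ hp ?_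
      rw [← mul_one (MonomialOrder.leadingCoeff _ p), ← C_mul_monomial]
      exact Ideal.mul_mem_left _ _ hlead
    · simpa [MonomialOrder.subLTerm, coeff_monomial, Ne.symm hαd] using hα

theorem eq_span_X_of_mem_associatedPrimes (hI : IsMonomialIdeal I)
    {P : Ideal (MvPolynomial (Fin r) K)}
    (hP : P ∈ associatedPrimes (MvPolynomial (Fin r) K) (MvPolynomial (Fin r) K ⧸ I)) :
    P = Ideal.span (X '' {i | X i ∈ P}) := by
  obtain ⟨hPp, g, hg⟩ := Ideal.mem_associatedPrimes_quotient_iff.mp hP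
  refine le_antisymm (fun p hp => mem_ideal_span_X_image.mpr fun α hα => ?_)
    (Ideal.span_le.mpr (Set.image_subset_iff.mpr fun i hi => hi))
  have hαP := hI.monomial_mem_of_eq_colon hPp hg hp hα
  rw [monomial_eq, C_1, one_mul, Finsupp.prod] at hαP
  obtain ⟨i, hi, hXi⟩ := (Ideal.IsPrime.prod_mem_iff (hp := hPp)).mp hαP
  exact ⟨i, hPp.mem_of_pow_mem _ hXi, Finsupp.mem_support_iff.mp hi⟩

end IsMonomialIdeal

namespace Hypergraph

variable {r : ℕ}

noncomputable def multiplicity {n : ℕ} (g : Fin n → Finset (Fin r)) : Fin r →₀ ℕ :=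
  ∑ i, ∑ v ∈ g i, Finsupp.single v 1

theorem multiplicity_apply {n : ℕ} (g : Fin n → Finset (Fin r)) (u : Fin r) :
    multiplicity g u = (Finset.univ.filter fun i => u ∈ g i).card := by
  classical
  simp [multiplicity, Finsupp.finsetSum_apply, Finsupp.single_apply]

theorem multiplicity_apply_le {n : ℕ} (g : Fin n → Finset (Fin r)) (u : Fin r) :
    multiplicity g u ≤ n := by
  rw [multiplicity_apply]
  exact (Finset.card_filter_le _ _).trans_eq (Finset.card_fin n)

theorem multiplicity_apply_lt_iff {n : ℕ} {g : Fin n → Finset (Fin r)} {u : Fin r} :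
    multiplicity g u < n ↔ ∃ i, u ∉ g i := by
  rw [multiplicity_apply]
  constructor
  · intro h
    by_contra! hall
    simp [hall] at h
  · rintro ⟨i, hi⟩
    simpa using Finset.card_lt_card (Finset.filter_ssubset.mpr ⟨i, Finset.mem_univ i, hi⟩)

theorem prod_prod_X_eq_monomial {R : Type*} [CommSemiring R] {n : ℕ} (g : Fin n → Finset (Fin r)) :
    ∏ i, ∏ v ∈ g i, (X v : MvPolynomial (Fin r) R) = monomial (multiplicity g) 1 := by
  simp only [multiplicity, monomial_sum_one]
  rfl

def Colorable (t : ℕ) (E : Set (Finset (Fin r))) : Prop :=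
  ∃ c : Fin r → Fin t, ∀ e ∈ E, ∀ i : Fin t, ¬ (∀ v ∈ e, c v = i)

theorem _root_.hChromaticNumber_le {E : Set (Finset (Fin r))} {t : ℕ} (h : Colorable t E) :
    hChromaticNumber E ≤ t :=
  Nat.sInf_le h

theorem Colorable.mono {E : Set (Finset (Fin r))} {t t' : ℕ} (hE : ∀ e ∈ E, e.Nonempty)
    (h : Colorable t E) (htt' : t ≤ t') : Colorable t' E := by
  obtain ⟨c, hc⟩ := h
  refine ⟨fun v => Fin.castLE htt' (c v), fun e he i hi => ?_⟩
  obtain ⟨v₀, hv₀⟩ := hE e he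
  exact hc e he (c v₀) fun v hv => Fin.castLE_injective htt' ((hi v hv).trans (hi v₀ hv₀).symm)

def induce (E : Set (Finset (Fin r))) (S : Finset (Fin r)) : Set (Finset (Fin r)) :=
  {e ∈ E | e ⊆ S}

theorem exists_critical {E : Set (Finset (Fin r))} {t : ℕ} (h : ¬ Colorable t E) :
    ∃ S, ¬ Colorable t (induce E S) ∧ ∀ v ∈ S, Colorable t (induce E (S.erase v)) := by
  have huniv : ¬ Colorable t (induce E Finset.univ) := by
    simpa [induce] using h
  obtain ⟨S, -, hS, hmin⟩ :=
    exists_minimal_le_of_wellFoundedLT (fun S => ¬ Colorable t (induce E S)) _ huniv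
  refine ⟨S, hS, fun v hv => by_contra fun hv' => ?_⟩
  exact Finset.notMem_erase v S (hmin hv' (Finset.erase_subset v S) hv)

/-- The covers are the complements of the colour classes of `S`. -/
theorem colorable_induce_iff {E : Set (Finset (Fin r))} {S : Finset (Fin r)} {t : ℕ} (ht : 0 < t) :
    Colorable t (induce E S) ↔
      ∃ g : Fin t → Finset (Fin r), (∀ i, IsVertexCover E (g i)) ∧ ∀ u ∈ S, ∃ i, u ∉ g i := by
  classical
  constructor
  · rintro ⟨c, hc⟩
    refine ⟨fun i => Finset.univ.filter fun v => v ∉ S ∨ c v ≠ i, fun i e he => ?_,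
      fun u hu => ⟨c u, by simp [hu]⟩⟩
    by_cases heS : e ⊆ S
    · push Not at hc
      obtain ⟨v, hv, hcv⟩ := hc e ⟨he, heS⟩ i
      exact ⟨v, hv, by simp [hcv]⟩
    · obtain ⟨v, hv, hvS⟩ := Finset.not_subset.mp heS
      exact ⟨v, hv, by simp [hvS]⟩
  · rintro ⟨g, hg, hS⟩
    refine ⟨fun u => if h : ∃ i, u ∉ g i then h.choose else ⟨0, ht⟩, ?_⟩
    rintro e ⟨he, heS⟩ i hi
    obtain ⟨v, hv, hvg⟩ := hg i e he
    have hex : ∃ i, v ∉ g i := hS v (heS hv)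
    have := hi v hv
    simp only [dif_pos hex] at this
    exact hex.choose_spec (this ▸ hvg)

end Hypergraph

open Hypergraph

section CoverIdeal

variable {K : Type} [Field K] {r : ℕ} {E : Set (Finset (Fin r))}

theorem coverIdeal_eq_span_vertexCovers :
    coverIdeal K E = Ideal.span {p | ∃ W, IsVertexCover E W ∧ p = ∏ i ∈ W, X i} := by
  refine le_antisymm (Ideal.span_mono fun p ⟨W, hW, _, hp⟩ => ⟨W, hW, hp⟩) ?_
  refine Ideal.span_le.mpr fun p ⟨W, hW, hp⟩ => ?_
  obtain ⟨W', hW'W, hW', hmin⟩ := exists_minimal_le_of_wellFoundedLT (IsVertexCover E) W hW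
  refine hp ▸ Ideal.mem_of_dvd _ (Finset.prod_dvd_prod_of_subset _ _ _ hW'W) (Ideal.subset_span ?_)
  exact ⟨W', hW', fun W'' hW''W' hW'' => le_antisymm hW''W' (hmin hW'' hW''W'), rfl⟩

theorem coverIdeal_pow_eq (n : ℕ) :
    coverIdeal K E ^ n = Ideal.span ((fun α => monomial α (1 : K)) ''
      {α | ∃ g : Fin n → Finset (Fin r), (∀ i, IsVertexCover E (g i)) ∧ multiplicity g = α}) := by
  rw [coverIdeal_eq_span_vertexCovers, Ideal.span, Submodule.span_pow]
  congr 1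
  ext p
  simp only [Set.mem_pow, List.prod_ofFn, Set.mem_image, Set.mem_ofPred_eq]
  constructor
  · rintro ⟨f, rfl⟩
    choose W hW hWf using fun i => (f i).2
    exact ⟨_, ⟨W, hW, rfl⟩, by simp [← prod_prod_X_eq_monomial, hWf]⟩
  · rintro ⟨_, ⟨W, hW, rfl⟩, rfl⟩
    exact ⟨fun i => ⟨_, W i, hW i, rfl⟩, prod_prod_X_eq_monomial W⟩

theorem isMonomialIdeal_coverIdeal_pow (n : ℕ) : IsMonomialIdeal (coverIdeal K E ^ n) :=
  ⟨_, coverIdeal_pow_eq n⟩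

theorem monomial_mem_coverIdeal_pow_iff {n : ℕ} {β : Fin r →₀ ℕ} :
    monomial β (1 : K) ∈ coverIdeal K E ^ n ↔
      ∃ g : Fin n → Finset (Fin r), (∀ i, IsVertexCover E (g i)) ∧ multiplicity g ≤ β := by
  classical
  simp [coverIdeal_pow_eq, mem_ideal_span_monomial_image, support_monomial]

noncomputable def criticalExponent (S : Finset (Fin r)) (d : ℕ) : Fin r →₀ ℕ :=
  Finsupp.equivFunOnFinite.symm fun u => if u ∈ S then d - 1 else d

theorem criticalExponent_apply (S : Finset (Fin r)) (d : ℕ) (u : Fin r) :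
    criticalExponent S d u = if u ∈ S then d - 1 else d :=
  rfl

theorem span_X_mem_associatedPrimes_coverIdeal_pow {S : Finset (Fin r)} {d : ℕ} (hd : 0 < d)
    (hS : ¬ Colorable d (induce E S)) (hcrit : ∀ v ∈ S, Colorable d (induce E (S.erase v))) :
    Ideal.span (X '' ↑S) ∈ associatedPrimes (MvPolynomial (Fin r) K)
      (MvPolynomial (Fin r) K ⧸ coverIdeal K E ^ d) := by
  classical
  refine Ideal.mem_associatedPrimes_quotient_iff.mpr
    ⟨isPrime_span_X_image _, monomial (criticalExponent S d) 1, le_antisymm ?_ fun q hq => ?_⟩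
  · refine Ideal.span_le.mpr ?_
    rintro _ ⟨v, hv, rfl⟩
    rw [Finset.mem_coe] at hv
    obtain ⟨g, hg, hgS⟩ := (colorable_induce_iff hd).mp (hcrit v hv)
    rw [SetLike.mem_coe, Submodule.mem_colon_singleton, smul_eq_mul, X, monomial_mul, one_mul,
      monomial_mem_coverIdeal_pow_iff]
    refine ⟨g, hg, Finsupp.le_def.mpr fun u => ?_⟩
    have hle := multiplicity_apply_le g u
    rw [Finsupp.add_apply, Finsupp.single_apply, criticalExponent_apply]
    by_cases hvu : v = u
    · subst hvu
      simp only [if_pos hv, if_true]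
      omega
    · by_cases huS : u ∈ S
      · have := multiplicity_apply_lt_iff.mpr (hgS u (Finset.mem_erase.mpr ⟨Ne.symm hvu, huS⟩))
        simp only [if_neg hvu, if_pos huS]
        omega
      · simp only [if_neg hvu, if_neg huS]
        omega
  · rw [Submodule.mem_colon_singleton, smul_eq_mul] at hq
    by_contra hqS
    obtain ⟨γ, hγ, hγS⟩ : ∃ γ ∈ q.support, ∀ i ∈ S, γ i = 0 := by
      simpa [mem_ideal_span_X_image] using hqS
    have hmem := (isMonomialIdeal_coverIdeal_pow d).monomial_mem_of_mem_support hq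
      (α := γ + criticalExponent S d)
      (by rw [mem_support_iff, coeff_mul_monomial, mul_one]; exact mem_support_iff.mp hγ)
    obtain ⟨g, hg, hgβ⟩ := monomial_mem_coverIdeal_pow_iff.mp hmem
    refine hS ((colorable_induce_iff hd).mpr ⟨g, hg, fun u hu => multiplicity_apply_lt_iff.mp ?_⟩)
    have := Finsupp.le_def.mp hgβ u
    rw [Finsupp.add_apply, criticalExponent_apply, if_pos hu, hγS u hu] at this
    omega

/-- A witness `f` for `P_S` has a monomial `x^γ ∉ Jˢ` with all `X_v x^γ ∈ Jˢ` (`v ∈ S`); the covers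
behind `X_{v₀} x^γ`, together with the cover `[r] ∖ {v₀}`, give an `(s + 1)`-coloring. -/
theorem colorable_induce_of_span_X_mem_associatedPrimes (hE : ∀ e ∈ E, 2 ≤ e.card)
    {S : Finset (Fin r)} (hS : S.Nonempty) {s : ℕ}
    (h : Ideal.span (X '' ↑S) ∈ associatedPrimes (MvPolynomial (Fin r) K)
      (MvPolynomial (Fin r) K ⧸ coverIdeal K E ^ s)) :
    Colorable (s + 1) (induce E S) := by
  classical
  obtain ⟨hP, f, hf⟩ := Ideal.mem_associatedPrimes_quotient_iff.mp h
  have hJ := isMonomialIdeal_coverIdeal_pow (K := K) (E := E) s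
  obtain ⟨γ, hγ, hγJ⟩ : ∃ γ ∈ f.support, monomial γ 1 ∉ coverIdeal K E ^ s := by
    by_contra! hall
    apply hP.ne_top
    rw [hf, Submodule.colon_eq_top_iff_subset, Set.singleton_subset_iff]
    exact hJ.mem_iff.mpr hall
  have hcov (v : Fin r) (hv : v ∈ S) : ∃ g : Fin s → Finset (Fin r),
      (∀ i, IsVertexCover E (g i)) ∧ multiplicity g ≤ γ + Finsupp.single v 1 := by
    have hXv : X v ∈ Ideal.span (X '' ↑S : Set (MvPolynomial (Fin r) K)) :=
      Ideal.subset_span ⟨v, hv, rfl⟩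
    rw [hf, Submodule.mem_colon_singleton, smul_eq_mul] at hXv
    refine monomial_mem_coverIdeal_pow_iff.mp (hJ.monomial_mem_of_mem_support hXv ?_)
    rw [mem_support_iff, add_comm, X, coeff_monomial_mul, one_mul]
    exact mem_support_iff.mp hγ
  have hγS (v : Fin r) (hv : v ∈ S) : γ v < s := by
    obtain ⟨g, hg, hgγ⟩ := hcov v hv
    obtain ⟨w, hw⟩ : ∃ w, γ w < multiplicity g w := by
      by_contra! hle
      exact hγJ (monomial_mem_coverIdeal_pow_iff.mpr ⟨g, hg, Finsupp.le_def.mpr hle⟩)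
    have hgw := Finsupp.le_def.mp hgγ w
    have := multiplicity_apply_le g w
    rw [Finsupp.add_apply, Finsupp.single_apply] at hgw
    by_cases hvw : v = w
    · subst hvw
      omega
    · rw [if_neg hvw] at hgw
      omega
  obtain ⟨v₀, hv₀⟩ := hS
  obtain ⟨g, hg, hgγ⟩ := hcov v₀ hv₀
  refine (colorable_induce_iff s.succ_pos).mpr
    ⟨Fin.snoc g (Finset.univ.erase v₀), fun i => ?_, fun u hu => ?_⟩
  · induction i using Fin.lastCases with
    | last =>
      intro e he
      obtain ⟨v, hv, hvv₀⟩ := Finset.exists_mem_ne (hE e he) v₀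
      exact ⟨v, hv, by simpa using hvv₀⟩
    | cast i => simpa using hg i
  · by_cases hu₀ : u = v₀
    · exact ⟨Fin.last s, by simp [hu₀]⟩
    · have hgu := Finsupp.le_def.mp hgγ u
      rw [Finsupp.add_apply, Finsupp.single_apply, if_neg (Ne.symm hu₀)] at hgu
      obtain ⟨i, hi⟩ :=
        multiplicity_apply_lt_iff.mp ((hgu.trans_eq (add_zero _)).trans_lt (hγS u hu))
      exact ⟨i.castSucc, by simpa using hi⟩

end CoverIdeal

theorem associatedPrimes_pow_eq_of_astab_le {R : Type} [CommRing R] {I : Ideal R}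
    (h : ∃ s, ∀ n ≥ s, associatedPrimes R (R ⧸ I ^ n) = associatedPrimes R (R ⧸ I ^ s))
    {n : ℕ} (hn : astab I ≤ n) :
    associatedPrimes R (R ⧸ I ^ n) = associatedPrimes R (R ⧸ I ^ astab I) := by
  obtain ⟨s, hs⟩ := h
  refine (Nat.sInf_mem ?_ : astab I ∈ _).2 n hn
  exact ⟨s + 1, by omega, fun n hn => (hs n (by omega)).trans (hs (s + 1) (by omega)).symm⟩

theorem exists_associatedPrimes_coverIdeal_pow_eq (K : Type) [Field K] {r : ℕ}
    (E : Set (Finset (Fin r))) :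
    ∃ s, ∀ n ≥ s, associatedPrimes (MvPolynomial (Fin r) K)
        (MvPolynomial (Fin r) K ⧸ coverIdeal K E ^ n) =
      associatedPrimes (MvPolynomial (Fin r) K) (MvPolynomial (Fin r) K ⧸ coverIdeal K E ^ s) := by
  refine (coverIdeal K E).exists_associatedPrimes_pow_eq
    ((Set.finite_range fun T : Set (Fin r) => Ideal.span (X '' T)).subset ?_)
  exact Set.iUnion_subset fun n P hP =>
    ⟨_, ((isMonomialIdeal_coverIdeal_pow n).eq_span_X_of_mem_associatedPrimes hP).symm⟩

theorem chromatic_le_astab_coverIdeal_general (K : Type) [Field K] (r : ℕ)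
    (E : Set (Finset (Fin r)))
    (hcard : ∀ e ∈ E, 2 ≤ e.card) :
    hChromaticNumber E - 1 ≤ astab (coverIdeal K E) := by
  set d := hChromaticNumber E - 1
  obtain hd | hd := Nat.eq_zero_or_pos d
  · exact hd ▸ Nat.zero_le _
  have hne (e : Finset (Fin r)) (he : e ∈ E) : e.Nonempty :=
    Finset.card_pos.mp (by have := hcard e he; omega)
  obtain ⟨S, hS, hcrit⟩ := exists_critical fun h : Colorable d E => by
    have := hChromaticNumber_le h
    omega
  have hSne : S.Nonempty := by
    refine Finset.nonempty_iff_ne_empty.mpr fun hS0 => hS ⟨fun _ => ⟨0, hd⟩, ?_⟩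
    rintro e ⟨he, heS⟩
    exact absurd (hne e he) (by simpa [hS0] using heS)
  have hass := span_X_mem_associatedPrimes_coverIdeal_pow (K := K) hd hS hcrit
  by_contra! hlt
  rw [associatedPrimes_pow_eq_of_astab_le (exists_associatedPrimes_coverIdeal_pow_eq K E)
    hlt.le] at hass
  exact hS ((colorable_induce_of_span_X_mem_associatedPrimes hcard hSne hass).mono
    (fun e he => hne e he.1) (by omega))

/-- **Francisco–Hà–Van Tuyl.** For a simple hypergraph `𝓗` (no isolated vertices, every
edge of cardinality ≥ 2, no edge contained in another) with cover ideal `J(𝓗)`: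
`astab(J(𝓗)) ≥ χ(𝓗) − 1`. -/
theorem chromatic_le_astab_coverIdeal (K : Type) [Field K] (r : ℕ)
    (E : Set (Finset (Fin r)))
    (hiso : ∀ v : Fin r, ∃ e ∈ E, v ∈ e)
    (hcard : ∀ e ∈ E, 2 ≤ e.card)
    (hanti : ∀ e ∈ E, ∀ f ∈ E, e ⊆ f → e = f) :
    hChromaticNumber E - 1 ≤ astab (coverIdeal K E) :=
  chromatic_le_astab_coverIdeal_general K r E hcard
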